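/- arXiv:math-ph/0703051 — 3 statements merged into one kernel-verified Lean document; each statement's English description precedes it below -/
import Mathlib

section
/- Fix S ≠ 0 real and define w(d) = -1/(S d²) - 2/d for d > 0 and b ≥ 0 real. Then lim_{d→0⁺} (1/d) · (1/√(1+(bd)²)) · (-1)/(2 + d√(1+(bd)²) · w(d)) = S. -/
open Filter

/-- With w(d) = -1/(Sd²) - 2/d, the quantity
(1/d)·(1/√(1+(bd)²))·(-1)/(2 + d√(1+(bd)²)·w(d)) tends to S as d → 0⁺. -/
theorem stmt_10 (S b : ℝ) (hS : S ≠ 0) (hb : 0 ≤ b) :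
    Tendsto (fun d : ℝ =>
        (1 / d) * (1 / Real.sqrt (1 + (b * d) ^ 2)) *
          ((-1) / (2 + d * Real.sqrt (1 + (b * d) ^ 2) * (-1 / (S * d ^ 2) - 2 / d))))
      (nhdsWithin 0 (Set.Ioi 0)) (nhds S) := by
  set g : ℝ → ℝ := fun d =>
    (-S / Real.sqrt (1 + (b * d) ^ 2)) /
      (2 * S * d - Real.sqrt (1 + (b * d) ^ 2) - 2 * S * d * Real.sqrt (1 + (b * d) ^ 2))
    with hg
  have hs : ContinuousAt (fun d : ℝ => Real.sqrt (1 + (b * d) ^ 2)) 0 := by fun_prop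
  have hcont : ContinuousAt g 0 := by
    apply ContinuousAt.div
    · exact continuousAt_const.div hs (by simp)
    · fun_prop
    · simp
  have hg0 : g 0 = S := by
    simp [hg]
  have hgt : Tendsto g (nhdsWithin 0 (Set.Ioi 0)) (nhds S) := by
    rw [← hg0]
    exact hcont.continuousWithinAt.tendsto
  refine hgt.congr' ?_
  filter_upwards [self_mem_nhdsWithin] with d hd
  have hd0 : (0:ℝ) < d := hd
  have hr : 0 < Real.sqrt (1 + (b * d) ^ 2) := by
    apply Real.sqrt_pos.mpr; positivity
  set r := Real.sqrt (1 + (b * d) ^ 2) with hrdef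
  set D := 2 + d * r * (-1 / (S * d ^ 2) - 2 / d) with hD
  have key : 2 * S * d - r - 2 * S * d * r = S * d * D := by
    rw [hD]; field_simp; ring
  have : g d = (-S / r) / (S * d * D) := by rw [hg]; simp only [← key]; rfl
  rw [this]
  rcases eq_or_ne D 0 with h | h
  · simp [h]
  · field_simp
end

section
/- Let κ > 0, α ≠ 0 real, and for d > 0 set v(d) = -1/d³ + α/d², and G_d = sinh(κd³)e^{-κd³}/κ. Then v(d)/(1 + v(d)·G_d) = -(1/d⁴)·(1/α + O(d)) as d → 0⁺; more precisely, lim_{d→0⁺} d⁴ · v(d)/(1 + v(d)·G_d) = -1/α. -/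
open Filter

lemma sinh_exp_eq (u : ℝ) :
    Real.sinh u * Real.exp (-u) = (1 - Real.exp (-(2 * u))) / 2 := by
  have h1 : Real.exp (-(2 * u)) = Real.exp (-u) * Real.exp (-u) := by
    rw [← Real.exp_add]; ring_nf
  have h2 : Real.exp u * Real.exp (-u) = 1 := by
    rw [← Real.exp_add, add_neg_cancel, Real.exp_zero]
  rw [Real.sinh_eq, h1]
  linear_combination h2 / 2

/-- With v(d) = -1/d³ + α/d² and G_d = sinh(κd³)e^{-κd³}/κ, one has
d⁴·v(d)/(1 + v(d)G_d) → -1/α as d → 0⁺. -/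
theorem stmt_13 (κ α : ℝ) (hκ : 0 < κ) (hα : α ≠ 0) :
    Tendsto (fun d : ℝ =>
        d ^ 4 * ((-1 / d ^ 3 + α / d ^ 2) /
          (1 + (-1 / d ^ 3 + α / d ^ 2) *
            (Real.sinh (κ * d ^ 3) * Real.exp (-(κ * d ^ 3)) / κ))))
      (nhdsWithin 0 (Set.Ioi 0)) (nhds (-1 / α)) := by
  set G : ℝ → ℝ := fun d => Real.sinh (κ * d ^ 3) * Real.exp (-(κ * d ^ 3)) / κ with hG
  have hGval : ∀ d : ℝ, G d = (1 - Real.exp (-(2 * (κ * d ^ 3)))) / (2 * κ) := by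
    intro d
    rw [hG]
    simp only
    rw [sinh_exp_eq]
    field_simp
  -- basic exp bounds
  have hub : ∀ x : ℝ, 1 - Real.exp (-x) ≤ x := by
    intro x
    have := Real.add_one_le_exp (-x)
    linarith
  have hlb : ∀ x : ℝ, x * Real.exp (-x) ≤ 1 - Real.exp (-x) := by
    intro x
    have h1 := Real.add_one_le_exp x
    have h2 : Real.exp x * Real.exp (-x) = 1 := by
      rw [← Real.exp_add, add_neg_cancel, Real.exp_zero]
    nlinarith [Real.exp_pos (-x)]
  -- limit of G d / d^3
  have h2 : Tendsto (fun d => G d / d ^ 3) (nhdsWithin 0 (Set.Ioi 0)) (nhds 1) := by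
    have hlow : Tendsto (fun d : ℝ => Real.exp (-(2 * (κ * d ^ 3))))
        (nhdsWithin 0 (Set.Ioi 0)) (nhds 1) := by
      have hc : Continuous fun d : ℝ => Real.exp (-(2 * (κ * d ^ 3))) := by continuity
      have := (hc.tendsto 0).mono_left (nhdsWithin_le_nhds (s := Set.Ioi 0))
      simpa using this
    refine tendsto_of_tendsto_of_tendsto_of_le_of_le' hlow tendsto_const_nhds ?_ ?_
    · filter_upwards [self_mem_nhdsWithin] with d (hd : 0 < d)
      have hx : 0 < 2 * (κ * d ^ 3) := by positivity
      rw [hGval, le_div_iff₀ (by positivity)]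
      have := hlb (2 * (κ * d ^ 3))
      calc Real.exp (-(2 * (κ * d ^ 3))) * d ^ 3
          = (2 * (κ * d ^ 3)) * Real.exp (-(2 * (κ * d ^ 3))) / (2 * κ) := by
            field_simp
        _ ≤ (1 - Real.exp (-(2 * (κ * d ^ 3)))) / (2 * κ) := by
            apply div_le_div_of_nonneg_right this (by positivity) |>.trans_eq rfl
    · filter_upwards [self_mem_nhdsWithin] with d (hd : 0 < d)
      rw [hGval, div_le_one (by positivity), div_le_iff₀ (by positivity)]
      have := hub (2 * (κ * d ^ 3))
      nlinarith
  -- limit of (d^3 - G d) / d^4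
  have h1 : Tendsto (fun d => (d ^ 3 - G d) / d ^ 4) (nhdsWithin 0 (Set.Ioi 0)) (nhds 0) := by
    have hupp : Tendsto (fun d : ℝ => 2 * κ * d ^ 2) (nhdsWithin 0 (Set.Ioi 0)) (nhds 0) := by
      have hc : Continuous fun d : ℝ => 2 * κ * d ^ 2 := by continuity
      have := (hc.tendsto 0).mono_left (nhdsWithin_le_nhds (s := Set.Ioi 0))
      simpa using this
    refine tendsto_of_tendsto_of_tendsto_of_le_of_le' tendsto_const_nhds hupp ?_ ?_
    · filter_upwards [self_mem_nhdsWithin] with d (hd : 0 < d)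
      have h := hub (2 * (κ * d ^ 3))
      rw [hGval]
      apply div_nonneg _ (by positivity)
      rw [sub_nonneg, div_le_iff₀ (by positivity)]
      nlinarith
    · filter_upwards [self_mem_nhdsWithin] with d (hd : 0 < d)
      have hu := hub (2 * (κ * d ^ 3))
      have hl := hlb (2 * (κ * d ^ 3))
      have he : 0 < Real.exp (-(2 * (κ * d ^ 3))) := Real.exp_pos _
      have hx : (0:ℝ) ≤ 2 * (κ * d ^ 3) := by positivity
      have key : 2 * (κ * d ^ 3) - (1 - Real.exp (-(2 * (κ * d ^ 3))))
          ≤ 2 * κ * d ^ 2 * d ^ 4 * (2 * κ) := by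
        nlinarith [mul_le_mul_of_nonneg_left hu hx]
      rw [hGval, div_le_iff₀ (by positivity : (0:ℝ) < d ^ 4)]
      calc d ^ 3 - (1 - Real.exp (-(2 * (κ * d ^ 3)))) / (2 * κ)
          = (2 * (κ * d ^ 3) - (1 - Real.exp (-(2 * (κ * d ^ 3))))) / (2 * κ) := by
            field_simp
        _ ≤ (2 * κ * d ^ 2 * d ^ 4 * (2 * κ)) / (2 * κ) := by
            exact div_le_div_of_nonneg_right key (by positivity) |>.trans_eq rfl
        _ = 2 * κ * d ^ 2 * d ^ 4 := by field_simp
  -- limit of the simplified expression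
  have hnum : Tendsto (fun d : ℝ => -1 + α * d) (nhdsWithin 0 (Set.Ioi 0)) (nhds (-1)) := by
    have hc : Continuous fun d : ℝ => -1 + α * d := by continuity
    have := (hc.tendsto 0).mono_left (nhdsWithin_le_nhds (s := Set.Ioi 0))
    simpa using this
  have hden : Tendsto (fun d => (d ^ 3 - G d) / d ^ 4 + α * (G d / d ^ 3))
      (nhdsWithin 0 (Set.Ioi 0)) (nhds α) := by
    have := h1.add ((tendsto_const_nhds (x := α) (f := nhdsWithin (0:ℝ) (Set.Ioi 0))).mul h2)
    simpa using this
  have hL : Tendsto (fun d => (-1 + α * d) / ((d ^ 3 - G d) / d ^ 4 + α * (G d / d ^ 3)))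
      (nhdsWithin 0 (Set.Ioi 0)) (nhds (-1 / α)) :=
    hnum.div hden hα
  -- eventual equality
  refine Tendsto.congr' ?_ hL
  filter_upwards [self_mem_nhdsWithin] with d (hd : 0 < d)
  have hd0 : d ≠ 0 := ne_of_gt hd
  set N : ℝ := -1 + α * d with hN
  set D : ℝ := d ^ 3 + N * G d with hD
  have hv : -1 / d ^ 3 + α / d ^ 2 = N / d ^ 3 := by
    rw [hN]; field_simp
  have hden1 : 1 + N / d ^ 3 * G d = D / d ^ 3 := by
    rw [hD]; field_simp
  have hden2 : (d ^ 3 - G d) / d ^ 4 + α * (G d / d ^ 3) = D / d ^ 4 := by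
    rw [hD, hN]; field_simp; ring
  rw [hden2, hv, hden1]
  rcases eq_or_ne D 0 with h | h
  · simp [h]
  · field_simp
end

section
/- Let c₁,...,cₙ, t₁,...,tₙ, γ₁,...,γₙ, τ₁,...,τₙ be real numbers, and define the n×n matrices A with rows A_j = c₁e₁ - c_{j+1}e_{j+1} for j = 1,...,n-1 and last row (γ₁,...,γₙ), and B with rows B_j = t₁e₁ - t_{j+1}e_{j+1} for j = 1,...,n-1 and last row (τ₁,...,τₙ). Then AB* is self-adjoint if and only if c₁τ₁ - γ₁t₁ = cⱼτⱼ - γⱼtⱼ for all j = 2,...,n. -/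
/-!
Every row of `A` and `B` except the last is a combination `x e₁ - y e_{j+1}`, so the entries of
`A Bᵀ` are explicit. The upper-left `n × n` block is symmetric for free: its `(i, j)` entry is
`c₁t₁ + [i = j] c_{i+1}t_{j+1}`. Hence symmetry only constrains the last row against the last
column, and `(A Bᵀ)_{j,n} = (A Bᵀ)_{n,j}` reads `c₁τ₁ - c_{j+1}τ_{j+1} = γ₁t₁ - γ_{j+1}t_{j+1}`.
-/

open Matrix

theorem Matrix.mul_transpose_apply {m n o R : Type*} [Fintype n] [Mul R] [AddCommMonoid R]
    (M : Matrix m n R) (N : Matrix o n R) (i : m) (k : o) :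
    (M * Nᵀ) i k = M i ⬝ᵥ N k :=
  mul_apply'

theorem single_sub_single_dotProduct {n R : Type*} [Fintype n] [DecidableEq n] [NonUnitalNonAssocRing R]
    (a b : n) (x y : R) (v : n → R) :
    (Pi.single a x - Pi.single b y) ⬝ᵥ v = x * v a - y * v b := by
  rw [sub_dotProduct, single_dotProduct, single_dotProduct]

theorem Matrix.isSymm_iff_of_isSymm_castSucc {n : ℕ} {R : Type*}
    (M : Matrix (Fin (n + 1)) (Fin (n + 1)) R)
    (hM : ∀ i j : Fin n, M i.castSucc j.castSucc = M j.castSucc i.castSucc) :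
    M.IsSymm ↔ ∀ i : Fin n, M i.castSucc (Fin.last n) = M (Fin.last n) i.castSucc := by
  simp only [IsSymm.ext_iff, Fin.forall_fin_succ', hM, implies_true, true_and, and_true]
  exact ⟨fun h i => (h.1 i).symm, fun h => ⟨fun i => (h i).symm, h⟩⟩

theorem row_castSucc_eq_single_sub_single {n : ℕ} {R : Type*} [Zero R] [Sub R]
    {c : Fin (n + 1) → R} {A : Matrix (Fin (n + 1)) (Fin (n + 1)) R}
    (hA : ∀ (j : Fin n) (k : Fin (n + 1)),
      A j.castSucc k = (if k = 0 then c 0 else 0) - (if k = j.succ then c j.succ else 0))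
    (j : Fin n) :
    A j.castSucc = Pi.single 0 (c 0) - Pi.single j.succ (c j.succ) := by
  ext k
  simp only [hA, Pi.sub_apply, Pi.single_apply]

theorem stmt_16_general (n : ℕ)
    (c t γ τ : Fin (n + 1) → ℝ)
    (A B : Matrix (Fin (n + 1)) (Fin (n + 1)) ℝ)
    (hA : ∀ (j : Fin n) (k : Fin (n + 1)),
      A j.castSucc k = (if k = 0 then c 0 else 0) - (if k = j.succ then c j.succ else 0))
    (hAlast : ∀ k, A (Fin.last n) k = γ k)
    (hB : ∀ (j : Fin n) (k : Fin (n + 1)),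
      B j.castSucc k = (if k = 0 then t 0 else 0) - (if k = j.succ then t j.succ else 0))
    (hBlast : ∀ k, B (Fin.last n) k = τ k) :
    (A * Bᵀ).IsSymm ↔ ∀ j : Fin (n + 1), c 0 * τ 0 - γ 0 * t 0 = c j * τ j - γ j * t j := by
  have hArow := row_castSucc_eq_single_sub_single hA
  have hBrow := row_castSucc_eq_single_sub_single hB
  have hAB : ∀ i j : Fin n, (A * Bᵀ) i.castSucc j.castSucc = (A * Bᵀ) j.castSucc i.castSucc := by
    intro i j
    simp only [mul_transpose_apply, hArow, hBrow, single_sub_single_dotProduct, Pi.sub_apply,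
      Pi.single_apply, Fin.succ_ne_zero, (Fin.succ_ne_zero _).symm, Fin.succ_inj]
    rcases eq_or_ne i j with rfl | hij
    · rfl
    · simp [hij, hij.symm]
  rw [isSymm_iff_of_isSymm_castSucc _ hAB, Fin.forall_fin_succ]
  have hAlast' : A (Fin.last n) = γ := funext hAlast
  have hBlast' : B (Fin.last n) = τ := funext hBlast
  simp only [true_and, mul_transpose_apply, hArow, hBrow, hAlast', hBlast',
    single_sub_single_dotProduct, dotProduct_comm γ]
  exact forall_congr' fun i => by constructor <;> intro h <;> linarith

/-- For the matrices A (rows c₁e₁ - c_{j+1}e_{j+1} and last row γ) and B (rows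
t₁e₁ - t_{j+1}e_{j+1} and last row τ), A Bᵀ is self-adjoint iff
c₁τ₁ - γ₁t₁ = cⱼτⱼ - γⱼtⱼ for all j. -/
theorem stmt_16 (n : ℕ) (hn : 1 ≤ n)
    (c t γ τ : Fin (n + 1) → ℝ)
    (A B : Matrix (Fin (n + 1)) (Fin (n + 1)) ℝ)
    (hA : ∀ (j : Fin n) (k : Fin (n + 1)),
      A j.castSucc k = (if k = 0 then c 0 else 0) - (if k = j.succ then c j.succ else 0))
    (hAlast : ∀ k, A (Fin.last n) k = γ k)
    (hB : ∀ (j : Fin n) (k : Fin (n + 1)),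
      B j.castSucc k = (if k = 0 then t 0 else 0) - (if k = j.succ then t j.succ else 0))
    (hBlast : ∀ k, B (Fin.last n) k = τ k) :
    (A * Bᵀ).IsSymm ↔ ∀ j : Fin (n + 1), c 0 * τ 0 - γ 0 * t 0 = c j * τ j - γ j * t j :=
  stmt_16_general n c t γ τ A B hA hAlast hB hBlast
end
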